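/- Let X be a finite group with an outer action on the hyperfinite II₁ factor R, implemented by unitaries {u_x} in the crossed product R ⋊ X, and let ω be a free ultrafilter on ℕ. Then R^ω ∩ (R ⋊ X)' = (R_ω)^X, the fixed points of the pointwise ultrapower action of X on the central sequence algebra R_ω; moreover (R^X)^ω ∩ R' is contained in (R_ω)^X. -/

import Mathlib

open scoped ENNReal

noncomputable section

section Base

variable {M : Type*} [NormedRing M] [StarRing M] [CStarRing M] [NormedAlgebra ℂ M] [StarModule ℂ M] [PartialOrder M] [StarOrderedRing M] [CompleteSpace M]

/-- A faithful normalized tracial state (the trace of a finite von Neumann algebra). -/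
structure IsTracialState (tr : M →ₗ[ℂ] ℂ) : Prop where
  map_one : tr 1 = 1
  tr_comm : ∀ x y : M, tr (x * y) = tr (y * x)
  pos : ∀ x : M, 0 ≤ x → ∃ r : ℝ, 0 ≤ r ∧ tr x = (r : ℂ)
  faithful : ∀ x : M, 0 ≤ x → tr x = 0 → x = 0
  norm_le : ∀ x : M, ‖tr x‖ ≤ ‖x‖

/-- The trace 2-norm `‖x‖₂ = √(tr (x* x))`. -/
def nrm2 (tr : M →ₗ[ℂ] ℂ) (x : M) : ℝ := Real.sqrt ((tr (star x * x)).re)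

/-- The commutant of a subset. -/
def commutantSet (S : Set M) : Set M := {x | ∀ s ∈ S, s * x = x * s}

/-- The relative commutant `A' ∩ B`. -/
def relCommSet (A B : Set M) : Set M := {x | x ∈ B ∧ ∀ a ∈ A, a * x = x * a}

/-- The center of a subset: elements of `S` commuting with all of `S`. -/
def centerSet (S : Set M) : Set M := {x | x ∈ S ∧ ∀ y ∈ S, x * y = y * x}

/-- `S` is a (sub)factor: its relative center consists of scalars. -/
def IsSubFactorSet (S : Set M) : Prop :=
  ∀ z ∈ S, (∀ y ∈ S, z * y = y * z) → ∃ c : ℂ, z = algebraMap ℂ M c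

/-- A trace-preserving conditional expectation onto the subalgebra (set) `A`. -/
structure IsCondExp (tr : M →ₗ[ℂ] ℂ) (A : Set M) (E : M →ₗ[ℂ] M) : Prop where
  mem : ∀ x : M, E x ∈ A
  fix : ∀ x ∈ A, E x = x
  bimod : ∀ a ∈ A, ∀ b ∈ A, ∀ x : M, E (a * x * b) = a * E x * b
  pos : ∀ x : M, 0 ≤ x → 0 ≤ E x
  map_star : ∀ x : M, E (star x) = star (E x)
  trace_eq : ∀ x : M, tr (E x) = tr x

/-- The Pimsner–Popa index `[B : A]` of an inclusion `A ⊆ B`, computed from the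
trace-preserving conditional expectation `E` onto `A`: the reciprocal of the best
constant `λ` such that `λ • x ≤ E x` for every positive `x ∈ B`. -/
def ppIndex (E : M →ₗ[ℂ] M) (B : Set M) : ℝ≥0∞ :=
  (⨆ (l : NNReal) (_ : ∀ x ∈ B, 0 ≤ x → (((l : ℝ) : ℂ)) • x ≤ E x), (l : ℝ≥0∞))⁻¹

/-- A II₁ factor: an infinite-dimensional factor with a faithful tracial state. -/
structure IsII1Factor (tr : M →ₗ[ℂ] ℂ) : Prop where
  tracial : IsTracialState tr
  factor : ∀ z : M, (∀ y : M, z * y = y * z) → ∃ c : ℂ, z = algebraMap ℂ M c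
  infiniteDimensional : ¬ FiniteDimensional ℂ M

/-- Hyperfiniteness of `S`: an increasing chain of finite-dimensional *-subalgebras
contained in `S` whose union is `‖·‖₂`-dense in `S`. -/
def IsHyperfiniteSet (tr : M →ₗ[ℂ] ℂ) (S : Set M) : Prop :=
  ∃ B : ℕ → StarSubalgebra ℂ M, Monotone B ∧ (∀ n, FiniteDimensional ℂ ↥(B n)) ∧
    (∀ n, (B n : Set M) ⊆ S) ∧
    ∀ x ∈ S, ∀ ε : ℝ, 0 < ε → ∃ n, ∃ y ∈ B n, nrm2 tr (x - y) < ε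

/-- A bounded sequence. -/
def BddSeq (x : ℕ → M) : Prop := ∃ C : ℝ, ∀ n, ‖x n‖ ≤ C

/-- A free ultrafilter on ℕ: one containing all cofinite sets. -/
def IsFreeUltrafilter (ω : Ultrafilter ℕ) : Prop := (ω : Filter ℕ) ≤ Filter.cofinite

variable {N : Type*} [NormedRing N] [StarRing N] [CStarRing N] [NormedAlgebra ℂ N] [StarModule ℂ N] [PartialOrder N] [StarOrderedRing N] [CompleteSpace N]

/-- `π` presents `N` as the tracial ultrapower `M^ω`: the quotient of the algebra of
bounded sequences in `M` by the ideal of sequences with `‖·‖₂ → 0` along `ω`. -/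
structure IsUltrapower (ω : Ultrafilter ℕ) (trM : M →ₗ[ℂ] ℂ) (trN : N →ₗ[ℂ] ℂ)
    (π : (ℕ → M) → N) : Prop where
  map_add : ∀ x y : ℕ → M, BddSeq x → BddSeq y → π (fun n => x n + y n) = π x + π y
  map_mul : ∀ x y : ℕ → M, BddSeq x → BddSeq y → π (fun n => x n * y n) = π x * π y
  map_smul : ∀ (c : ℂ) (x : ℕ → M), BddSeq x → π (fun n => c • x n) = c • π x
  map_star : ∀ x : ℕ → M, BddSeq x → π (fun n => star (x n)) = star (π x)
  map_one : π (fun _ => 1) = 1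
  norm_le : ∀ (x : ℕ → M) (C : ℝ), (∀ n, ‖x n‖ ≤ C) → ‖π x‖ ≤ C
  trace_tendsto : ∀ x : ℕ → M, BddSeq x →
    Filter.Tendsto (fun n => trM (x n)) (ω : Filter ℕ) (nhds (trN (π x)))
  eq_iff : ∀ x y : ℕ → M, BddSeq x → BddSeq y →
    (π x = π y ↔ Filter.Tendsto (fun n => nrm2 trM (x n - y n)) (ω : Filter ℕ) (nhds 0))
  surj : ∀ z : N, ∃ x : ℕ → M, BddSeq x ∧ π x = z

/-- The canonical embedding of `M` into the ultrapower, via constant sequences. -/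
def uConst (π : (ℕ → M) → N) (a : M) : N := π (fun _ => a)

/-- The image `S^ω` in the ultrapower of the bounded sequences with entries in `S`. -/
def uSet (π : (ℕ → M) → N) (S : Set M) : Set N :=
  {z | ∃ x : ℕ → M, BddSeq x ∧ (∀ n, x n ∈ S) ∧ π x = z}

end Base

/-!
If `y ∈ R^ω` commutes with `R` and with every `u x`, it commutes with each `r * u x` and hence
with their linear span, which is `‖·‖₂`-dense in `R ⋊ X`. Writing `y` as a bounded sequence
`(y_n)` with `‖y_n‖ ≤ C`, the estimate `‖p y_n - y_n p‖₂ ≤ 2 C ‖p - a‖₂ + ‖a y_n - y_n a‖₂`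
passes this commutation to the limit `a → p`, so `y` commutes with all of `R ⋊ X`.
The remaining inclusions are immediate from the definitions.
-/

section Trace

variable {A : Type*} [CStarAlgebra A]

lemma nrm2_nonneg (tr : A →ₗ[ℂ] ℂ) (x : A) : 0 ≤ nrm2 tr x := Real.sqrt_nonneg _

lemma nrm2_neg (tr : A →ₗ[ℂ] ℂ) (x : A) : nrm2 tr (-x) = nrm2 tr x := by
  simp [nrm2]

variable [PartialOrder A] [StarOrderedRing A]

namespace IsTracialState

variable {tr : A →ₗ[ℂ] ℂ} (htr : IsTracialState tr)
include htr

lemma re_mono {a b : A} (hab : a ≤ b) : (tr a).re ≤ (tr b).re := by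
  obtain ⟨r, hr0, hr⟩ := htr.pos (b - a) (sub_nonneg.2 hab)
  have := congrArg Complex.re hr
  rw [map_sub, Complex.sub_re, Complex.ofReal_re] at this
  linarith

omit [StarOrderedRing A] in
lemma map_algebraMap_real (t : ℝ) : tr (algebraMap ℝ A t) = t := by
  rw [Algebra.algebraMap_eq_smul_one, ← algebraMap_smul ℂ t (1 : A), map_smul, htr.map_one]
  simp

lemma im_eq_zero_of_isSelfAdjoint {a : A} (ha : IsSelfAdjoint a) : (tr a).im = 0 := by
  have hpos : 0 ≤ a + algebraMap ℝ A ‖a‖ := by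
    simpa [neg_le_iff_add_nonneg] using ha.neg_algebraMap_norm_le_self
  obtain ⟨r, -, hr⟩ := htr.pos _ hpos
  have := congrArg Complex.im hr
  rwa [map_add, htr.map_algebraMap_real, Complex.add_im, Complex.ofReal_im, Complex.ofReal_im,
    add_zero] at this

lemma map_star (z : A) : tr (star z) = starRingEnd ℂ (tr z) := by
  have h₁ := htr.im_eq_zero_of_isSelfAdjoint (a := z + star z)
    (by simp [IsSelfAdjoint, star_add, add_comm])
  have h₂ := htr.im_eq_zero_of_isSelfAdjoint (a := Complex.I • z - Complex.I • star z) (by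
    simp only [IsSelfAdjoint, star_sub, star_smul, star_star, RCLike.star_def, Complex.conj_I,
      neg_smul]
    abel)
  rw [map_add] at h₁
  rw [map_sub, map_smul, map_smul] at h₂
  simp only [Complex.add_im, Complex.sub_im, Complex.mul_im, Complex.I_re, Complex.I_im,
    smul_eq_mul] at h₁ h₂
  apply Complex.ext <;> simp only [Complex.conj_re, Complex.conj_im] <;> linarith

/-- The GNS pre-inner product, whose seminorm is `nrm2 tr`. -/
abbrev innerCore : PreInnerProductSpace.Core ℂ A where
  inner x y := tr (star x * y)
  conj_inner_symm x y := by
    change starRingEnd ℂ (tr (star y * x)) = tr (star x * y)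
    rw [← htr.map_star, star_mul, star_star]
  re_inner_nonneg x := by
    obtain ⟨r, hr0, hr⟩ := htr.pos (star x * x) (star_mul_self_nonneg x)
    change 0 ≤ (tr (star x * x)).re
    rwa [hr, Complex.ofReal_re]
  add_left x y z := by
    change tr (star (x + y) * z) = tr (star x * z) + tr (star y * z)
    rw [star_add, add_mul, map_add]
  smul_left x y c := by
    change tr (star (c • x) * y) = starRingEnd ℂ c * tr (star x * y)
    rw [star_smul, smul_mul_assoc, map_smul, smul_eq_mul, RCLike.star_def]

lemma nrm2_add_le (x y : A) : nrm2 tr (x + y) ≤ nrm2 tr x + nrm2 tr y :=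
  letI := InnerProductSpace.Core.toSeminormedAddCommGroup (c := htr.innerCore)
  norm_add_le x y

lemma nrm2_sub_le (x y : A) : nrm2 tr (x - y) ≤ nrm2 tr x + nrm2 tr y := by
  simpa only [sub_eq_add_neg, nrm2_neg] using htr.nrm2_add_le x (-y)

omit [StarOrderedRing A] in
lemma nrm2_star (x : A) : nrm2 tr (star x) = nrm2 tr x := by
  rw [nrm2, nrm2, star_star, htr.tr_comm]

lemma nrm2_mul_le_left (a b : A) : nrm2 tr (a * b) ≤ ‖a‖ * nrm2 tr b := by
  have hle : star (a * b) * (a * b) ≤ (‖a‖ ^ 2) • (star b * b) :=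
    calc star (a * b) * (a * b) = star b * (star a * a) * b := by
          rw [star_mul]; noncomm_ring
      _ ≤ star b * algebraMap ℝ A (‖a‖ ^ 2) * b :=
          star_left_conjugate_le_conjugate CStarAlgebra.star_mul_le_algebraMap_norm_sq b
      _ = (‖a‖ ^ 2) • (star b * b) := by
          rw [Algebra.algebraMap_eq_smul_one, mul_smul_one, smul_mul_assoc]
  have hre : (tr (star (a * b) * (a * b))).re ≤ ‖a‖ ^ 2 * (tr (star b * b)).re := by
    refine (htr.re_mono hle).trans_eq ?_
    rw [tr.map_smul_of_tower, Complex.smul_re, smul_eq_mul]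
  calc nrm2 tr (a * b) ≤ Real.sqrt (‖a‖ ^ 2 * (tr (star b * b)).re) := Real.sqrt_le_sqrt hre
    _ = ‖a‖ * nrm2 tr b := by
        rw [Real.sqrt_mul (sq_nonneg _), Real.sqrt_sq (norm_nonneg _), nrm2]

lemma nrm2_mul_le_right (a b : A) : nrm2 tr (a * b) ≤ nrm2 tr a * ‖b‖ := by
  simpa only [← star_mul, htr.nrm2_star, norm_star, mul_comm (‖b‖)] using
    htr.nrm2_mul_le_left (star b) (star a)

lemma nrm2_commutator_le (p a x : A) :
    nrm2 tr (p * x - x * p) ≤ 2 * ‖x‖ * nrm2 tr (p - a) + nrm2 tr (a * x - x * a) := by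
  have hsplit : p * x - x * p = ((p - a) * x + (a * x - x * a)) - x * (p - a) := by noncomm_ring
  calc nrm2 tr (p * x - x * p)
      ≤ nrm2 tr ((p - a) * x) + nrm2 tr (a * x - x * a) + nrm2 tr (x * (p - a)) := by
        rw [hsplit]
        exact (htr.nrm2_sub_le _ _).trans (by gcongr; exact htr.nrm2_add_le _ _)
    _ ≤ nrm2 tr (p - a) * ‖x‖ + nrm2 tr (a * x - x * a) + ‖x‖ * nrm2 tr (p - a) := by
        gcongr
        · exact htr.nrm2_mul_le_right _ _
        · exact htr.nrm2_mul_le_left _ _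
    _ = 2 * ‖x‖ * nrm2 tr (p - a) + nrm2 tr (a * x - x * a) := by ring

lemma tendsto_nrm2_commutator_of_approx {l : Filter ℕ} {x : ℕ → A} {C : ℝ}
    (hx : ∀ n, ‖x n‖ ≤ C) {p : A}
    (happrox : ∀ ε > 0, ∃ a, nrm2 tr (p - a) < ε ∧
      Filter.Tendsto (fun n => nrm2 tr (a * x n - x n * a)) l (nhds 0)) :
    Filter.Tendsto (fun n => nrm2 tr (p * x n - x n * p)) l (nhds 0) := by
  have hC : 0 ≤ C := (norm_nonneg _).trans (hx 0)
  refine tendsto_order.2 ⟨fun b hb => Filter.Eventually.of_forall fun n =>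
    hb.trans_le (nrm2_nonneg _ _), fun ε hε => ?_⟩
  obtain ⟨a, hpa, ha⟩ := happrox (ε / (4 * (C + 1))) (by positivity)
  have hpa' : 2 * C * nrm2 tr (p - a) ≤ ε / 2 :=
    calc 2 * C * nrm2 tr (p - a) ≤ 2 * (C + 1) * (ε / (4 * (C + 1))) :=
          mul_le_mul (by linarith) hpa.le (nrm2_nonneg _ _) (by linarith)
      _ = ε / 2 := by field_simp; ring
  filter_upwards [(tendsto_order.1 ha).2 (ε / 2) (by positivity)] with n hn
  calc nrm2 tr (p * x n - x n * p)
      ≤ 2 * ‖x n‖ * nrm2 tr (p - a) + nrm2 tr (a * x n - x n * a) := htr.nrm2_commutator_le p a _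
    _ ≤ 2 * C * nrm2 tr (p - a) + nrm2 tr (a * x n - x n * a) := by
        gcongr
        exacts [nrm2_nonneg _ _, hx n]
    _ < ε := by linarith

end IsTracialState

end Trace

section Ultrapower

variable {M : Type*} [NormedRing M]

lemma bddSeq_const (a : M) : BddSeq (fun _ : ℕ => a) := ⟨‖a‖, fun _ => le_rfl⟩

lemma BddSeq.const_mul {x : ℕ → M} (hx : BddSeq x) (a : M) : BddSeq (fun n => a * x n) := by
  obtain ⟨C, hC⟩ := hx
  exact ⟨‖a‖ * C, fun n => (norm_mul_le _ _).trans (by gcongr; exact hC n)⟩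

lemma BddSeq.mul_const {x : ℕ → M} (hx : BddSeq x) (a : M) : BddSeq (fun n => x n * a) := by
  obtain ⟨C, hC⟩ := hx
  exact ⟨C * ‖a‖, fun n => (norm_mul_le _ _).trans (by gcongr; exact hC n)⟩

lemma uSet_mono {N : Type*} (π : (ℕ → M) → N) {S T : Set M} (hST : S ⊆ T) :
    uSet π S ⊆ uSet π T :=
  fun _ ⟨x, hx, hxS, hπx⟩ => ⟨x, hx, fun n => hST (hxS n), hπx⟩

variable [StarRing M] [NormedAlgebra ℂ M] {N : Type*} [NormedRing N] [StarRing N]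
  [NormedAlgebra ℂ N]

namespace IsUltrapower

variable {ω : Ultrafilter ℕ} {trM : M →ₗ[ℂ] ℂ} {trN : N →ₗ[ℂ] ℂ} {π : (ℕ → M) → N}
  (hπ : IsUltrapower ω trM trN π)
include hπ

lemma const_mul_eq (a : M) {x : ℕ → M} (hx : BddSeq x) :
    uConst π a * π x = π (fun n => a * x n) :=
  (hπ.map_mul _ x (bddSeq_const a) hx).symm

lemma mul_const_eq (a : M) {x : ℕ → M} (hx : BddSeq x) :
    π x * uConst π a = π (fun n => x n * a) :=
  (hπ.map_mul x _ hx (bddSeq_const a)).symm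

def constAlgHom : M →ₐ[ℂ] N where
  toFun := uConst π
  map_one' := hπ.map_one
  map_mul' a b := (hπ.const_mul_eq a (bddSeq_const b)).symm
  map_zero' := by simpa [uConst] using hπ.map_smul 0 _ (bddSeq_const (0 : M))
  map_add' a b := hπ.map_add _ _ (bddSeq_const a) (bddSeq_const b)
  commutes' c := by
    simpa [uConst, Algebra.algebraMap_eq_smul_one, hπ.map_one] using
      hπ.map_smul c _ (bddSeq_const (1 : M))

@[simp]
lemma constAlgHom_apply (a : M) : hπ.constAlgHom a = uConst π a := rfl

lemma commute_const_of_forall_commute (a : M) {x : ℕ → M} (hx : BddSeq x)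
    (hax : ∀ n, Commute a (x n)) : Commute (uConst π a) (π x) := by
  rw [Commute, SemiconjBy, hπ.const_mul_eq a hx, hπ.mul_const_eq a hx]
  exact congrArg π (funext hax)

lemma commute_const_iff_tendsto (a : M) {x : ℕ → M} (hx : BddSeq x) :
    Commute (uConst π a) (π x) ↔
      Filter.Tendsto (fun n => nrm2 trM (a * x n - x n * a)) (ω : Filter ℕ) (nhds 0) := by
  rw [Commute, SemiconjBy, hπ.const_mul_eq a hx, hπ.mul_const_eq a hx,
    hπ.eq_iff _ _ (hx.const_mul a) (hx.mul_const a)]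

lemma commute_const_of_mem_span {S : Set M} {y : N} (hS : ∀ s ∈ S, Commute (uConst π s) y)
    {a : M} (ha : a ∈ Submodule.span ℂ S) : Commute (uConst π a) y := by
  have hspan : Submodule.span ℂ S ≤
      Subalgebra.toSubmodule ((Subalgebra.centralizer ℂ {y}).comap hπ.constAlgHom) :=
    Submodule.span_le.2 fun s hs =>
      (Subalgebra.mem_centralizer_iff ℂ).2 fun _ hy => hy ▸ (hS s hs).symm
  have hay : hπ.constAlgHom a ∈ Subalgebra.centralizer ℂ {y} := hspan ha
  exact ((Subalgebra.mem_centralizer_iff ℂ).1 hay y rfl).symm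

end IsUltrapower

end Ultrapower

lemma IsUltrapower.commute_const_of_dense_span {A : Type*} [CStarAlgebra A] [PartialOrder A]
    [StarOrderedRing A] {N : Type*} [NormedRing N] [StarRing N] [NormedAlgebra ℂ N]
    {ω : Ultrafilter ℕ} {trA : A →ₗ[ℂ] ℂ} {trN : N →ₗ[ℂ] ℂ} {π : (ℕ → A) → N}
    (hπ : IsUltrapower ω trA trN π) (htr : IsTracialState trA) {S : Set A}
    (hdense : ∀ p : A, ∀ ε : ℝ, 0 < ε → ∃ a ∈ Submodule.span ℂ S, nrm2 trA (p - a) < ε)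
    {y : N} (hS : ∀ s ∈ S, Commute (uConst π s) y) (p : A) : Commute (uConst π p) y := by
  obtain ⟨x, ⟨C, hC⟩, rfl⟩ := hπ.surj y
  rw [hπ.commute_const_iff_tendsto p ⟨C, hC⟩]
  refine htr.tendsto_nrm2_commutator_of_approx hC fun ε hε => ?_
  obtain ⟨a, ha, hpa⟩ := hdense p ε hε
  exact ⟨a, hpa, (hπ.commute_const_iff_tendsto a ⟨C, hC⟩).1 (hπ.commute_const_of_mem_span hS ha)⟩

theorem crossed_product_central_sequences_general
    {P : Type*} [NormedRing P] [StarRing P] [CStarRing P] [NormedAlgebra ℂ P] [StarModule ℂ P] [PartialOrder P] [StarOrderedRing P] [CompleteSpace P]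
    {N : Type*} [NormedRing N] [StarRing N] [NormedAlgebra ℂ N]
    (trP : P →ₗ[ℂ] ℂ) (trN : N →ₗ[ℂ] ℂ)
    -- `P` is the crossed product `R ⋊ X`, a II₁ factor:
    (hP : IsII1Factor trP)
    {X : Type*}
    (Rsub : StarSubalgebra ℂ P)
    -- the unitaries `u x` implementing the action of `X` on `R`:
    (u : X → P)
    -- `P` is generated by `R` and the `u x`:
    (hgen : ∀ p : P, ∀ ε : ℝ, 0 < ε →
      ∃ y ∈ Submodule.span ℂ {z : P | ∃ r ∈ Rsub, ∃ x : X, z = r * u x},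
        nrm2 trP (p - y) < ε)
    (ω : Ultrafilter ℕ)
    (π : (ℕ → P) → N) (hπ : IsUltrapower ω trP trN π) :
    -- `R^ω ∩ (R ⋊ X)' = (R_ω)^X` (fixedness under `(α_x)_ω = Ad (u x)_ω` expressed
    -- as commutation with the constant sequence on the unitary `u x`):
    uSet π (Rsub : Set P) ∩ commutantSet (Set.range (uConst π)) =
      (uSet π (Rsub : Set P) ∩ commutantSet (uConst π '' (Rsub : Set P)) ∩
        {y : N | ∀ x : X, uConst π (u x) * y = y * uConst π (u x)}) ∧
    -- `(R^X)^ω ∩ R' ⊆ (R_ω)^X`: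
    uSet π {r : P | r ∈ Rsub ∧ ∀ x : X, u x * r = r * u x} ∩
        commutantSet (uConst π '' (Rsub : Set P)) ⊆
      (uSet π (Rsub : Set P) ∩ commutantSet (uConst π '' (Rsub : Set P)) ∩
        {y : N | ∀ x : X, uConst π (u x) * y = y * uConst π (u x)}) := by
  let _ : CStarAlgebra P := { ‹NormedRing P›, ‹StarRing P›, ‹CStarRing P›, ‹NormedAlgebra ℂ P›,
    ‹StarModule ℂ P›, ‹CompleteSpace P› with }
  refine ⟨Set.Subset.antisymm ?_ ?_, ?_⟩
  · rintro y ⟨hyR, hy⟩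
    exact ⟨⟨hyR, fun s hs => hy s (Set.image_subset_range _ _ hs)⟩, fun x => hy _ ⟨u x, rfl⟩⟩
  · rintro y ⟨⟨hyR, hyRc⟩, hyu⟩
    refine ⟨hyR, ?_⟩
    rintro _ ⟨p, rfl⟩
    refine hπ.commute_const_of_dense_span hP.tracial hgen ?_ p
    rintro _ ⟨r, hr, x, rfl⟩
    rw [← hπ.constAlgHom_apply, map_mul]
    exact Commute.mul_left (hyRc _ ⟨r, hr, rfl⟩) (hyu x)
  · rintro y ⟨⟨x, hx, hxfix, rfl⟩, hyRc⟩
    refine ⟨⟨uSet_mono π (fun _ h => h.1) ⟨x, hx, hxfix, rfl⟩, hyRc⟩, fun g => ?_⟩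
    exact hπ.commute_const_of_forall_commute (u g) hx fun n => (hxfix n).2 g

/-- Let `X` be a finite group with an outer action on the
hyperfinite II₁ factor `R`, implemented by unitaries `u x` in the crossed product
`P = R ⋊ X`, and `ω` a free ultrafilter on ℕ.  Then
`R^ω ∩ (R ⋊ X)' = (R_ω)^X`, the fixed points of the pointwise ultrapower action of
`X` on the central sequence algebra `R_ω`; moreover `(R^X)^ω ∩ R' ⊆ (R_ω)^X`. -/
theorem crossed_product_central_sequences
    {P : Type*} [NormedRing P] [StarRing P] [CStarRing P] [NormedAlgebra ℂ P] [StarModule ℂ P] [PartialOrder P] [StarOrderedRing P] [CompleteSpace P]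
    {N : Type*} [NormedRing N] [StarRing N] [CStarRing N] [NormedAlgebra ℂ N] [StarModule ℂ N] [PartialOrder N] [StarOrderedRing N] [CompleteSpace N]
    (trP : P →ₗ[ℂ] ℂ) (trN : N →ₗ[ℂ] ℂ)
    -- `P` is the crossed product `R ⋊ X`, a II₁ factor:
    (hP : IsII1Factor trP)
    {X : Type*} [Group X] [Fintype X]
    (Rsub : StarSubalgebra ℂ P)
    (hRfac : IsSubFactorSet (Rsub : Set P)) (hRinf : ¬ FiniteDimensional ℂ ↥Rsub)
    (hRhyp : IsHyperfiniteSet trP (Rsub : Set P))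
    -- the unitaries `u x` implementing the action of `X` on `R`:
    (u : X → P)
    (hu1 : u 1 = 1)
    (humul : ∀ x y : X, u (x * y) = u x * u y)
    (huni : ∀ x : X, u x ∈ unitary P)
    (hcov : ∀ x : X, ∀ r ∈ Rsub, u x * r * star (u x) ∈ Rsub)
    -- the action is outer:
    (houter : ∀ x : X, x ≠ 1 → ¬ ∃ v, v ∈ Rsub ∧ v ∈ unitary P ∧
      ∀ r ∈ Rsub, u x * r * star (u x) = v * r * star v)
    -- `P` is generated by `R` and the `u x`:
    (hgen : ∀ p : P, ∀ ε : ℝ, 0 < ε →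
      ∃ y ∈ Submodule.span ℂ {z : P | ∃ r ∈ Rsub, ∃ x : X, z = r * u x},
        nrm2 trP (p - y) < ε)
    -- crossed-product trace:
    (htr0 : ∀ x : X, x ≠ 1 → ∀ r ∈ Rsub, trP (r * u x) = 0)
    (ω : Ultrafilter ℕ) (hω : IsFreeUltrafilter ω)
    (π : (ℕ → P) → N) (hπ : IsUltrapower ω trP trN π) :
    -- `R^ω ∩ (R ⋊ X)' = (R_ω)^X` (fixedness under `(α_x)_ω = Ad (u x)_ω` expressed
    -- as commutation with the constant sequence on the unitary `u x`):
    uSet π (Rsub : Set P) ∩ commutantSet (Set.range (uConst π)) =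
      (uSet π (Rsub : Set P) ∩ commutantSet (uConst π '' (Rsub : Set P)) ∩
        {y : N | ∀ x : X, uConst π (u x) * y = y * uConst π (u x)}) ∧
    -- `(R^X)^ω ∩ R' ⊆ (R_ω)^X`:
    uSet π {r : P | r ∈ Rsub ∧ ∀ x : X, u x * r = r * u x} ∩
        commutantSet (uConst π '' (Rsub : Set P)) ⊆
      (uSet π (Rsub : Set P) ∩ commutantSet (uConst π '' (Rsub : Set P)) ∩
        {y : N | ∀ x : X, uConst π (u x) * y = y * uConst π (u x)}) :=
  crossed_product_central_sequences_general trP trN hP Rsub u hgen ω π hπ
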